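/- There exists a finite rotation-puzzle instance 𝒜 over the three-color tile set T_3 (the BOOL subpuzzle, representing a Boolean input variable) with one designated output boundary edge at its top, such that 𝒜 has exactly two solutions, one of which has color blue at the output edge and the other of which has color red at the output edge; in particular no solution has color yellow at the output edge. -/

import Mathlib

/-- The three Tantrix colors used in the three-color tile set. -/
inductive Color where
  | red
  | yellow
  | blue
deriving DecidableEq

/-- A tile is its clockwise color sequence: a word of length 6 over the colors,
edges indexed `0, …, 5` clockwise. -/
abbrev Tile := Fin 6 → Color

/-- Cyclic rotation of a tile by `k` steps: edge `i` of the rotated tile carries the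
color of edge `i + k` of the original sequence. -/
def rotTile (k : Fin 6) (t : Tile) : Tile := fun i => t (i + k)

open Color in
/-- The three-color tile set `T₃`, consisting of the 14 color sequences
yrrbby, ryybbr, yrrybb, ryyrbb, brrbyy, yrbybr, rbyryb, brybyr, brbyyr, bybrry,
ryrbby, rbryyb, ybyrrb, yrybbr. -/
def T3 : Set Tile :=
  { ![yellow,red,red,blue,blue,yellow],
    ![red,yellow,yellow,blue,blue,red],
    ![yellow,red,red,yellow,blue,blue],
    ![red,yellow,yellow,red,blue,blue],
    ![blue,red,red,blue,yellow,yellow],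
    ![yellow,red,blue,yellow,blue,red],
    ![red,blue,yellow,red,yellow,blue],
    ![blue,red,yellow,blue,yellow,red],
    ![blue,red,blue,yellow,yellow,red],
    ![blue,yellow,blue,red,red,yellow],
    ![red,yellow,red,blue,blue,yellow],
    ![red,blue,red,yellow,yellow,blue],
    ![yellow,blue,yellow,red,red,blue],
    ![yellow,red,yellow,blue,blue,red] }

/-- The six neighbor offsets of the hexagonal layout of `ℤ²`, listed clockwise
starting from straight up; edge `i` of a tile at `x` is the edge shared with the
neighboring point `x + dirs i`, and opposite directions differ by `3` (mod 6).
Two points are neighbors exactly if their difference is one of these offsets. -/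
def dirs : Fin 6 → ℤ × ℤ := ![(0,1), (1,1), (1,0), (0,-1), (-1,-1), (-1,0)]

/-- A finite rotation-puzzle instance over the tile set `T3`:
a function from a finite set of points of `ℤ²` to `T3`. -/
structure Puzzle where
  tiles : ℤ × ℤ → Option Tile
  finite : {x | tiles x ≠ none}.Finite
  memT3 : ∀ x t, tiles x = some t → t ∈ T3

/-- `sol` is a solution of the instance `P`: it assigns to each occupied point a
cyclic rotation of the tile placed there, such that for every pair of neighboring
occupied points the two assigned sequences give the same color to their joint edge
(edge `d` of the tile at `x` is glued to edge `d + 3` of the tile at `x + dirs d`). -/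
def IsSolution (P : Puzzle) (sol : ℤ × ℤ → Option Tile) : Prop :=
  (∀ x, (P.tiles x = none → sol x = none) ∧
    (∀ t, P.tiles x = some t → ∃ k : Fin 6, sol x = some (rotTile k t))) ∧
  (∀ (x : ℤ × ℤ) (d : Fin 6) (s s' : Tile),
    sol x = some s → sol (x + dirs d) = some s' → s d = s' (d + 3))

/-- `(x, d)` is a boundary edge of `P`: the point `x` is occupied and its
neighbor in direction `d` is not. -/
def IsBoundary (P : Puzzle) (x : ℤ × ℤ) (d : Fin 6) : Prop :=
  P.tiles x ≠ none ∧ P.tiles (x + dirs d) = none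

/-- The solution `sol` has color `c` at the edge in direction `d` of the tile at `x`. -/
def SolColor (sol : ℤ × ℤ → Option Tile) (x : ℤ × ℤ) (d : Fin 6) (c : Color) : Prop :=
  ∃ s, sol x = some s ∧ s d = c

/-
Tiles `A = B = C = yrrbby` sit at `(0,0), (1,1), (1,0)`, pairwise adjacent, and
`D = rbryyb` at `(2,1)`, adjacent to `B` and `C`. A solution is a choice of rotation at each
of the four points, and a finite search over the `6⁴` choices leaves exactly two compatible
ones; they show blue and red respectively on the top edge of `A`, which faces the empty
point `(0,1)`.
-/

section Placement

variable {n : ℕ} (pos : Fin n → ℤ × ℤ)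

noncomputable def place (f : Fin n → Tile) : ℤ × ℤ → Option Tile :=
  Function.extend pos (some ∘ f) fun _ => none

variable {pos}

theorem place_apply (hpos : pos.Injective) (f : Fin n → Tile) (i : Fin n) :
    place pos f (pos i) = some (f i) :=
  hpos.extend_apply _ _ i

theorem place_eq_none_iff {f : Fin n → Tile} {x : ℤ × ℤ} :
    place pos f x = none ↔ ∀ i, pos i ≠ x := by
  by_cases hx : ∃ i, pos i = x
  · obtain ⟨i, rfl⟩ := hx
    simp only [place, Function.extend_def, dif_pos (⟨i, rfl⟩ : ∃ j, pos j = pos i),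
      Function.comp_apply, reduceCtorEq, false_iff, not_forall, not_not]
    exact ⟨i, rfl⟩
  · rw [place, Function.extend_apply' _ _ _ hx]
    simpa using hx

theorem exists_of_place_eq_some {f : Fin n → Tile} {x : ℤ × ℤ} {t : Tile}
    (h : place pos f x = some t) : ∃ i, pos i = x ∧ f i = t := by
  rw [place, Function.extend_def] at h
  split_ifs at h with hx
  exact ⟨_, hx.choose_spec, Option.some_injective _ h⟩

variable (pos) (tile : Fin n → Tile)

noncomputable def Puzzle.ofPlacement (htile : ∀ i, tile i ∈ T3) : Puzzle where
  tiles := place pos tile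
  finite := (Set.finite_range pos).subset fun _ hx => by
    by_contra h
    exact hx (place_eq_none_iff.2 fun i hi => h ⟨i, hi⟩)
  memT3 _ _ ht := by
    obtain ⟨i, -, rfl⟩ := exists_of_place_eq_some ht
    exact htile i

def Compatible (ρ : Fin n → Fin 6) : Prop :=
  ∀ i j d, pos i + dirs d = pos j →
    rotTile (ρ i) (tile i) d = rotTile (ρ j) (tile j) (d + 3)

instance : DecidablePred (Compatible pos tile) := fun _ => by
  unfold Compatible; infer_instance

variable {pos tile} {htile : ∀ i, tile i ∈ T3}

theorem IsSolution.exists_compatible (hpos : pos.Injective) {sol : ℤ × ℤ → Option Tile}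
    (hsol : IsSolution (Puzzle.ofPlacement pos tile htile) sol) :
    ∃ ρ, Compatible pos tile ρ ∧ sol = place pos fun i => rotTile (ρ i) (tile i) := by
  choose ρ hρ using fun i => (hsol.1 (pos i)).2 (tile i) (place_apply hpos tile i)
  refine ⟨ρ, fun i j d hij => hsol.2 (pos i) d _ _ (hρ i) (hij ▸ hρ j), funext fun x => ?_⟩
  by_cases hx : ∃ i, pos i = x
  · obtain ⟨i, rfl⟩ := hx
    rw [hρ i, place_apply hpos]
  · push Not at hx
    rw [(hsol.1 x).1 (place_eq_none_iff.2 hx), place_eq_none_iff.2 hx]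

theorem isSolution_of_compatible (hpos : pos.Injective) {ρ : Fin n → Fin 6}
    (hρ : Compatible pos tile ρ) :
    IsSolution (Puzzle.ofPlacement pos tile htile)
      (place pos fun i => rotTile (ρ i) (tile i)) := by
  refine ⟨fun x => ⟨fun hx => place_eq_none_iff.2 (place_eq_none_iff.1 hx), fun t ht => ?_⟩,
    fun x d s s' hs hs' => ?_⟩
  · obtain ⟨i, rfl, rfl⟩ := exists_of_place_eq_some ht
    exact ⟨ρ i, place_apply hpos _ i⟩
  · obtain ⟨i, rfl, rfl⟩ := exists_of_place_eq_some hs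
    obtain ⟨j, hj, rfl⟩ := exists_of_place_eq_some hs'
    exact hρ i j d hj.symm

theorem isSolution_ofPlacement_iff (hpos : pos.Injective) {sol : ℤ × ℤ → Option Tile} :
    IsSolution (Puzzle.ofPlacement pos tile htile) sol ↔
      ∃ ρ, Compatible pos tile ρ ∧ sol = place pos fun i => rotTile (ρ i) (tile i) :=
  ⟨IsSolution.exists_compatible hpos,
    fun ⟨_, hρ, hsol⟩ => hsol ▸ isSolution_of_compatible hpos hρ⟩

end Placement

theorem SolColor.unique {sol : ℤ × ℤ → Option Tile} {x : ℤ × ℤ} {d : Fin 6} {c c' : Color}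
    (h : SolColor sol x d c) (h' : SolColor sol x d c') : c = c' := by
  obtain ⟨s, hs, rfl⟩ := h
  obtain ⟨s', hs', rfl⟩ := h'
  rw [Option.some_injective _ (hs.symm.trans hs')]

theorem SolColor.ne_of_ne {sol sol' : ℤ × ℤ → Option Tile} {x : ℤ × ℤ} {d : Fin 6}
    {c c' : Color} (h : SolColor sol x d c) (h' : SolColor sol' x d c') (hc : c ≠ c') :
    sol ≠ sol' := by
  rintro rfl
  exact hc (h.unique h')

section Bool

open Color

def boolPos : Fin 4 → ℤ × ℤ := ![(0, 0), (1, 1), (1, 0), (2, 1)]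

def boolTiles : Fin 4 → Tile :=
  ![![yellow, red, red, blue, blue, yellow], ![yellow, red, red, blue, blue, yellow],
    ![yellow, red, red, blue, blue, yellow], ![red, blue, red, yellow, yellow, blue]]

theorem boolPos_injective : boolPos.Injective := by decide

theorem boolTiles_mem_T3 (i : Fin 4) : boolTiles i ∈ T3 := by
  fin_cases i <;> simp [T3, boolTiles]

theorem compatible_boolTiles_iff (ρ : Fin 4 → Fin 6) :
    Compatible boolPos boolTiles ρ ↔ ρ = ![4, 2, 0, 2] ∨ ρ = ![1, 3, 5, 5] := by
  revert ρ
  decide +kernel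

end Bool

/-- the three-color BOOL subpuzzle: one output boundary edge at the top; the instance has exactly two solutions, one with color blue and the other with color red at the output edge; in particular no solution has color yellow there. -/
theorem three_color_BOOL_subpuzzle :
    ∃ (P : Puzzle) (xOut : ℤ × ℤ),
      IsBoundary P xOut 0 ∧
      ∃ sol₁ sol₂ : ℤ × ℤ → Option Tile,
        IsSolution P sol₁ ∧ IsSolution P sol₂ ∧ sol₁ ≠ sol₂ ∧
        SolColor sol₁ xOut 0 Color.blue ∧ SolColor sol₂ xOut 0 Color.red ∧
        (∀ sol : ℤ × ℤ → Option Tile, IsSolution P sol → sol = sol₁ ∨ sol = sol₂)∧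
        (∀ sol : ℤ × ℤ → Option Tile, IsSolution P sol →
          ¬ SolColor sol xOut 0 Color.yellow) := by
  let P := Puzzle.ofPlacement boolPos boolTiles boolTiles_mem_T3
  let solOf (ρ : Fin 4 → Fin 6) := place boolPos fun i => rotTile (ρ i) (boolTiles i)
  have hsol (sol) : IsSolution P sol ↔ sol = solOf ![4, 2, 0, 2] ∨ sol = solOf ![1, 3, 5, 5] := by
    simp only [P, isSolution_ofPlacement_iff boolPos_injective, compatible_boolTiles_iff,
      or_and_right, exists_or, exists_eq_left, solOf]
  have hcolor (ρ : Fin 4 → Fin 6) : SolColor (solOf ρ) (boolPos 0) 0 (boolTiles 0 (ρ 0)) :=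
    ⟨_, place_apply boolPos_injective _ 0, by simp [rotTile]⟩
  have hblue := hcolor ![4, 2, 0, 2]
  have hred := hcolor ![1, 3, 5, 5]
  refine ⟨P, boolPos 0, ⟨?_, ?_⟩, _, _, (hsol _).2 (.inl rfl), (hsol _).2 (.inr rfl),
    hblue.ne_of_ne hred (by decide), hblue, hred, fun sol => (hsol sol).1, fun sol h hy => ?_⟩
  · simp [P, Puzzle.ofPlacement, place_apply boolPos_injective]
  · exact place_eq_none_iff.2 (by decide)
  · rcases (hsol sol).1 h with rfl | rfl
    exacts [absurd (hy.unique hblue) (by decide), absurd (hy.unique hred) (by decide)]
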